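/- arXiv:1910.10956 — 4 statements merged into one kernel-verified Lean document; each statement's English description precedes it below -/
import Mathlib

section
/- Let a, b, c be complex constants satisfying |a| = 1, conj(a)·b + conj(b) = 0, and |c|²·e^{|b|²} = 1. Then the map C_{a,b,c} defined on the Fock space F² by (C_{a,b,c} f)(z) = c·e^{bz}·conj(f(conj(az + b))) is an antilinear isometric involution (a conjugation) on F². -/
open MeasureTheory Complex Filter

noncomputable def fockWeight (z : ℂ) : ℝ := Real.exp (-(‖z‖)^2)

/-- Membership in the Fock space `F²`: entire and square-integrable against the Gaussian. -/
def MemFock (f : ℂ → ℂ) : Prop :=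
  Differentiable ℂ f ∧
    Integrable (fun z : ℂ => (‖f z‖)^2 * fockWeight z)

/-- The Fock space inner product `⟨f,g⟩ = (1/π) ∫ f(z) conj(g(z)) e^{-|z|²} dV(z)`. -/
noncomputable def fockInner (f g : ℂ → ℂ) : ℂ :=
  (Real.pi : ℂ)⁻¹ * ∫ z : ℂ, f z * star (g z) * (fockWeight z : ℂ)

/-- The squared Fock space norm. -/
noncomputable def fockNormSq (f : ℂ → ℂ) : ℝ :=
  Real.pi⁻¹ * ∫ z : ℂ, (‖f z‖)^2 * fockWeight z

/-- Graph of the maximal multi-valued weighted composition operator induced by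
`ψ(z) f(φ(z)) = Φ(z) g^{(m)}(z)`. -/
def SG (m : ℕ) (ψ φ Φ : ℂ → ℂ) (f g : ℂ → ℂ) : Prop :=
  MemFock f ∧ MemFock g ∧ ∀ z : ℂ, ψ z * f (φ z) = Φ z * iteratedDeriv m g z

/-- Membership `(u,v) ∈ G(S*)` for the adjoint of the maximal operator. -/
def AdjP (m : ℕ) (ψ φ Φ : ℂ → ℂ) (u v : ℂ → ℂ) : Prop :=
  MemFock u ∧ MemFock v ∧
    ∀ f g : ℂ → ℂ, SG m ψ φ Φ f g → fockInner g u = fockInner f v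

/-- The weighted composition conjugation `C_{a,b,c} f(z) = c e^{bz} conj(f(conj(az+b)))`. -/
noncomputable def Cabc (a b c : ℂ) (f : ℂ → ℂ) : ℂ → ℂ :=
  fun z => c * Complex.exp (b * z) * star (f (star (a * z + b)))

/-!
The map `T z = conj (a z + b)` is a rigid motion of `ℂ`, and under the hypotheses on `a`, `b` it
is an involution with `|T z|² = |z|² + |b|² - 2 Re (b z)`. Together with `|c|² e^{|b|²} = 1` this
gives `|c e^{bz}|² e^{-|z|²} = e^{-|T z|²}`: the weight of `C_{a,b,c}` exactly compensates the
Gaussian, so the integrand of `⟨C f, C g⟩` is that of `⟨g, f⟩` composed with `T`, and the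
isometry property is the change of variables `z ↦ T z`. Finally `C_{a,b,c}² = I` because
`T ∘ T = id` and `c e^{bz} · conj (c e^{b T z}) = |c|² e^{|b|²} = 1`.
-/

open ComplexConjugate

def affineConj (a b z : ℂ) : ℂ := star (a * z + b)

lemma Cabc_apply (a b c : ℂ) (f : ℂ → ℂ) (z : ℂ) :
    Cabc a b c f z = c * exp (b * z) * star (f (affineConj a b z)) := rfl

lemma Differentiable.Cabc (a b c : ℂ) {f : ℂ → ℂ} (hf : Differentiable ℂ f) :
    Differentiable ℂ (Cabc a b c f) := by
  have hf' : Differentiable ℂ (star ∘ f ∘ conj) := fun z =>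
    differentiableAt_star_conj_iff.mpr (hf _)
  exact ((differentiable_const c).mul (differentiable_exp.comp
    ((differentiable_const b).mul differentiable_id))).mul
    (hf'.comp (((differentiable_const a).mul differentiable_id).add (differentiable_const b)))

section affineConj

variable {a b : ℂ}

lemma star_mul_self_of_norm_eq_one (ha : ‖a‖ = 1) : star a * a = 1 := by
  rw [star_def, conj_mul', ha]
  norm_num

lemma mul_star_eq_neg_of_star_mul_add_star (hb : star a * b + star b = 0) : a * star b = -b := by
  have := congrArg star hb
  simp only [star_add, star_mul', star_star, star_zero] at this
  linear_combination this

lemma affineConj_affineConj (ha : ‖a‖ = 1) (hb : star a * b + star b = 0) (z : ℂ) :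
    affineConj a b (affineConj a b z) = z := by
  have := star_mul_self_of_norm_eq_one ha
  simp only [affineConj, star_add, star_mul', star_star]
  linear_combination z * this + hb

lemma measurePreserving_affineConj (ha : ‖a‖ = 1) :
    MeasurePreserving (affineConj a b) := by
  let u : Circle := ⟨a, mem_sphere_zero_iff_norm.mpr ha⟩
  exact conjLIE.measurePreserving.comp
    ((measurePreserving_add_right volume b).comp (rotation u).measurePreserving)

lemma measurableEmbedding_affineConj (ha : a ≠ 0) :
    MeasurableEmbedding (affineConj a b) :=
  conjLIE.toHomeomorph.measurableEmbedding.comp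
    ((Homeomorph.addRight b).measurableEmbedding.comp
      (Homeomorph.mulLeft₀ a ha).measurableEmbedding)

lemma norm_affineConj_sq (ha : ‖a‖ = 1) (hb : star a * b + star b = 0) (z : ℂ) :
    ‖affineConj a b z‖ ^ 2 = ‖z‖ ^ 2 + ‖b‖ ^ 2 - 2 * (b * z).re := by
  have hcross : (a * z * conj b).re = -(b * z).re := by
    rw [mul_right_comm, ← star_def, mul_star_eq_neg_of_star_mul_add_star hb]
    simp [mul_comm]
  simp only [affineConj, norm_star, Complex.sq_norm, normSq_add, normSq_mul, hcross]
  rw [normSq_eq_norm_sq a, ha]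
  ring

end affineConj

section Cabc

variable {a b c : ℂ}

lemma fockWeight_affineConj (ha : ‖a‖ = 1) (hb : star a * b + star b = 0)
    (hc : ‖c‖ ^ 2 * Real.exp (‖b‖ ^ 2) = 1) (z : ℂ) :
    fockWeight (affineConj a b z) = ‖c * exp (b * z)‖ ^ 2 * fockWeight z := by
  have hc' : ‖c‖ ^ 2 = Real.exp (-‖b‖ ^ 2) := by
    rw [Real.exp_neg]
    exact eq_inv_of_mul_eq_one_left hc
  simp only [fockWeight, norm_affineConj_sq ha hb, norm_mul, norm_exp, mul_pow, hc',
    ← Real.exp_nat_mul, ← Real.exp_add]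
  ring_nf

lemma norm_Cabc_sq_mul_fockWeight (ha : ‖a‖ = 1) (hb : star a * b + star b = 0)
    (hc : ‖c‖ ^ 2 * Real.exp (‖b‖ ^ 2) = 1) (f : ℂ → ℂ) (z : ℂ) :
    ‖Cabc a b c f z‖ ^ 2 * fockWeight z =
      ‖f (affineConj a b z)‖ ^ 2 * fockWeight (affineConj a b z) := by
  rw [fockWeight_affineConj ha hb hc, Cabc_apply, norm_mul _ (star _), norm_star]
  ring

lemma Cabc_mul_star_Cabc_mul_fockWeight (ha : ‖a‖ = 1) (hb : star a * b + star b = 0)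
    (hc : ‖c‖ ^ 2 * Real.exp (‖b‖ ^ 2) = 1) (f g : ℂ → ℂ) (z : ℂ) :
    Cabc a b c f z * star (Cabc a b c g z) * (fockWeight z : ℂ) =
      g (affineConj a b z) * star (f (affineConj a b z)) *
        (fockWeight (affineConj a b z) : ℂ) := by
  rw [fockWeight_affineConj ha hb hc, Cabc_apply, Cabc_apply]
  push_cast
  rw [← mul_conj', ← star_def]
  simp only [star_mul', star_star]
  ring

lemma Cabc_Cabc (ha : ‖a‖ = 1) (hb : star a * b + star b = 0)
    (hc : ‖c‖ ^ 2 * Real.exp (‖b‖ ^ 2) = 1) (f : ℂ → ℂ) (z : ℂ) :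
    Cabc a b c (Cabc a b c f) z = f z := by
  have hexp : star (b * affineConj a b z) = ‖b‖ ^ 2 - b * z := by
    simp only [affineConj, star_mul', star_star]
    rw [← conj_mul', ← star_def]
    linear_combination z * mul_star_eq_neg_of_star_mul_add_star hb
  have hunit : c * exp (b * z) * star (c * exp (b * affineConj a b z)) = 1 := by
    rw [star_mul', star_def, ← exp_conj, ← star_def, hexp, exp_sub, star_def]
    field_simp
    rw [mul_conj']
    exact_mod_cast hc
  rw [Cabc_apply, Cabc_apply, affineConj_affineConj ha hb, star_mul', star_star, ← mul_assoc,
    hunit, one_mul]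

lemma MemFock.Cabc (ha : ‖a‖ = 1) (hb : star a * b + star b = 0)
    (hc : ‖c‖ ^ 2 * Real.exp (‖b‖ ^ 2) = 1) {f : ℂ → ℂ} (hf : MemFock f) :
    MemFock (Cabc a b c f) := by
  refine ⟨hf.1.Cabc a b c, ?_⟩
  have hT := (measurePreserving_affineConj (b := b) ha).integrable_comp_emb
    (g := fun z => ‖f z‖ ^ 2 * fockWeight z)
    (measurableEmbedding_affineConj (norm_ne_zero_iff.mp (ha ▸ one_ne_zero)))
  exact (hT.mpr hf.2).congr (.of_forall fun z => (norm_Cabc_sq_mul_fockWeight ha hb hc f z).symm)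

lemma fockInner_Cabc_Cabc (ha : ‖a‖ = 1) (hb : star a * b + star b = 0)
    (hc : ‖c‖ ^ 2 * Real.exp (‖b‖ ^ 2) = 1) (f g : ℂ → ℂ) :
    fockInner (Cabc a b c f) (Cabc a b c g) = fockInner g f := by
  simp only [fockInner, Cabc_mul_star_Cabc_mul_fockWeight ha hb hc]
  rw [(measurePreserving_affineConj ha).integral_comp
    (measurableEmbedding_affineConj (norm_ne_zero_iff.mp (ha ▸ one_ne_zero)))
    fun w => g w * star (f w) * (fockWeight w : ℂ)]

end Cabc

/-- Under `|a| = 1`, `conj(a)b + conj(b) = 0`, `|c|² e^{|b|²} = 1`, the map `C_{a,b,c}`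
is an antilinear isometric involution (a conjugation) on the Fock space. -/
theorem stmt4 (a b c : ℂ) (ha : ‖a‖ = 1)
    (hb : star a * b + star b = 0)
    (hc : (‖c‖)^2 * Real.exp ((‖b‖)^2) = 1) :
    (∀ f : ℂ → ℂ, MemFock f → MemFock (Cabc a b c f)) ∧
    (∀ f g : ℂ → ℂ, ∀ z : ℂ, Cabc a b c (f + g) z = Cabc a b c f z + Cabc a b c g z) ∧
    (∀ (t : ℂ) (f : ℂ → ℂ) (z : ℂ),
      Cabc a b c (fun w => t * f w) z = star t * Cabc a b c f z) ∧
    (∀ f : ℂ → ℂ, ∀ z : ℂ, Cabc a b c (Cabc a b c f) z = f z) ∧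
    (∀ f g : ℂ → ℂ, MemFock f → MemFock g →
      fockInner (Cabc a b c f) (Cabc a b c g) = fockInner g f) := by
  refine ⟨fun f hf => hf.Cabc ha hb hc, fun f g z => ?_, fun t f z => ?_, Cabc_Cabc ha hb hc,
    fun f g _ _ => fockInner_Cabc_Cabc ha hb hc f g⟩
  · simp only [Cabc_apply, Pi.add_apply, star_add]
    ring
  · simp only [Cabc_apply, star_mul']
    ring
end

section
/- Let m ≥ 1, a, b, A, B, C, D complex constants with A ≠ 0, C ≠ 0, and set φ(z) = Az + B, ψ(z) = C e^{Dz}, Φ(z) = (aAz + aB + b)^m with a ≠ 0. Let S_max be the maximal operator on F² given by ψ(z)f(φ(z)) = Φ(z)g^{(m)}(z). Then every f ∈ dom(S_max) has a zero at −b/a of order at least m. -/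
open MeasureTheory Complex Filter

/-!
Substituting `w = Az + B` turns `Φ(z)` into `a^m (w + b/a)^m`, so the defining identity,
divided by the zero-free weight `ψ`, exhibits `f(w)` as `(w + b/a)^m` times an entire function.
Every derivative of order `< m` of such a product vanishes at `-b/a`.
-/

lemma iteratedDeriv_eq_zero_of_eq_pow_sub_mul {𝕜 : Type*} [NontriviallyNormedField 𝕜]
    [CharZero 𝕜] [CompleteSpace 𝕜] {m j : ℕ} {z₀ : 𝕜} {R R₁ : 𝕜 → 𝕜}
    (hR₁ : ∀ z, AnalyticAt 𝕜 R₁ z) (hR : ∀ z, R z = (z - z₀) ^ m * R₁ z) (hj : j < m) :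
    iteratedDeriv j R z₀ = 0 := by
  obtain ⟨t, rfl⟩ := Nat.exists_eq_add_of_lt hj
  obtain ⟨R₂, -, hR₂⟩ := iteratedDeriv_mul_pow_sub_of_analytic (k := j) (t := t + 1) hR₁
    (by simpa only [add_assoc] using hR)
  simp [hR₂]

lemma eq_pow_sub_mul_of_affine_comp {m : ℕ} {a b A B : ℂ} {ψ f G : ℂ → ℂ}
    (hA : A ≠ 0) (ha : a ≠ 0) (hψ : ∀ z, ψ z ≠ 0)
    (h : ∀ z, ψ z * f (A * z + B) = (a * A * z + a * B + b) ^ m * G z) (w : ℂ) :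
    f w = (w - -b / a) ^ m * (a ^ m * G ((w - B) / A) / ψ ((w - B) / A)) := by
  have hw : A * ((w - B) / A) + B = w := by field_simp; ring
  have hΦ : a * A * ((w - B) / A) + a * B + b = a * (w - -b / a) := by field_simp; ring
  have := h ((w - B) / A)
  rw [hw, hΦ, mul_pow] at this
  rw [← mul_div_assoc, eq_div_iff (hψ _)]
  linear_combination this

theorem stmt10_general (m : ℕ) (a b A B C D : ℂ)
    (hA : A ≠ 0) (hC : C ≠ 0) (ha : a ≠ 0)
    (f : ℂ → ℂ)
    (hdom : ∃ g : ℂ → ℂ, MemFock g ∧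
      ∀ z : ℂ, C * Complex.exp (D * z) * f (A * z + B) =
        (a * A * z + a * B + b) ^ m * iteratedDeriv m g z) :
    ∀ j < m, iteratedDeriv j f (-b / a) = 0 := by
  obtain ⟨g, hg, heq⟩ := hdom
  have hψ (z : ℂ) : C * Complex.exp (D * z) ≠ 0 := mul_ne_zero hC (Complex.exp_ne_zero _)
  have hgm (z : ℂ) : AnalyticAt ℂ (iteratedDeriv m g) z := by
    rw [iteratedDeriv_eq_iterate]
    exact (hg.1.analyticAt z).iterated_deriv m
  intro j hj
  refine iteratedDeriv_eq_zero_of_eq_pow_sub_mul (fun w => ?_)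
    (eq_pow_sub_mul_of_affine_comp hA ha hψ heq) hj
  have hz : AnalyticAt ℂ (fun w : ℂ => (w - B) / A) w := by fun_prop
  exact (analyticAt_const.mul ((hgm _).comp hz)).div
    (analyticAt_const.mul ((analyticAt_const.mul hz).cexp)) (hψ _)

/-- Every `f` in the domain of `S_max` (with the explicit symbols) vanishes at `-b/a`
to order at least `m`. -/
theorem stmt10 (m : ℕ) (hm : 1 ≤ m) (a b A B C D : ℂ)
    (hA : A ≠ 0) (hC : C ≠ 0) (ha : a ≠ 0)
    (f : ℂ → ℂ) (hf : MemFock f)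
    (hdom : ∃ g : ℂ → ℂ, MemFock g ∧
      ∀ z : ℂ, C * Complex.exp (D * z) * f (A * z + B) =
        (a * A * z + a * B + b) ^ m * iteratedDeriv m g z) :
    ∀ j < m, iteratedDeriv j f (-b / a) = 0 :=
  stmt10_general m a b A B C D hA hC ha f hdom
end

section
/- Let m ≥ 1, a ≠ 0, b ∈ ℂ, and A, B, C, D as above with A, C ≠ 0, φ(z) = Az+B, ψ(z) = Ce^{Dz}, Φ(z) = (aAz+aB+b)^m. For integers k with 0 ≤ k < m, the function K_{z,a,b}^{[k]}(x) = (ax+b)^k e^{x·conj(z)} does NOT belong to dom(S_max), while for k ≥ m it does belong to dom(S_max). -/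
open MeasureTheory Complex Filter

/-- The kernel-type function `K_{z,a,b}^{[k]}(x) = (ax+b)^k e^{x conj z}`. -/
noncomputable def Kker (a b z : ℂ) (k : ℕ) : ℂ → ℂ :=
  fun x => (a * x + b) ^ k * Complex.exp (x * star z)

/-- membership in `dom(S_max)` for the explicit symbols. -/
def domS (m : ℕ) (a b A B C D : ℂ) (f : ℂ → ℂ) : Prop :=
  MemFock f ∧ ∃ g : ℂ → ℂ, MemFock g ∧
    ∀ z : ℂ, C * Complex.exp (D * z) * f (A * z + B) =
      (a * A * z + a * B + b) ^ m * iteratedDeriv m g z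

/-!
Substituting `x = A t + B`, the left-hand side of the defining equation of `dom(S_max)` at
`K^{[k]}` becomes `(aAt + aB + b)^k` times the nowhere-vanishing entire function
`C e^{B z̄} e^{(D + A z̄) t}`. For `k < m`, cancelling the `k`-th power off the zero
`t₀ = -(aB + b)/(aA)` and passing to the limit `t → t₀` forces this function to vanish at `t₀`.
For `k ≥ m`, the required `g^{(m)}` is a polynomial times `e^{(D + A z̄) t}`; such a function has an
`m`-fold antiderivative of the same shape, and these all lie in `F²` because a polynomial grows
at most like `e^{|t|}`.
-/

open MeasureTheory Polynomial

namespace Polynomial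

variable {K : Type*} [Field K]

theorem exists_derivative_eq [CharZero K] (Q : K[X]) : ∃ R : K[X], derivative R = Q := by
  induction Q using Polynomial.induction_on' with
  | add p q hp hq =>
    obtain ⟨R₁, rfl⟩ := hp
    obtain ⟨R₂, rfl⟩ := hq
    exact ⟨R₁ + R₂, derivative_add⟩
  | monomial n c =>
    refine ⟨monomial (n + 1) (c / (n + 1)), ?_⟩
    rw [derivative_monomial, Nat.add_sub_cancel, Nat.cast_add_one,
      div_mul_cancel₀ _ (Nat.cast_add_one_ne_zero n)]

theorem exists_derivative_add_C_mul_eq_of_ne_zero {α : K} (hα : α ≠ 0) (Q : K[X]) :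
    ∃ R : K[X], derivative R + C α * R = Q := by
  induction h : Q.natDegree using Nat.strong_induction_on generalizing Q with
  | _ n ih =>
    -- `R = α⁻¹ Q - R'` where `R'` solves the equation for `α⁻¹ Q'`, which has lower degree.
    rcases Nat.eq_zero_or_pos n with rfl | hn
    · refine ⟨C α⁻¹ * Q, ?_⟩
      rw [eq_C_of_natDegree_eq_zero h, ← map_mul, derivative_C, zero_add, ← map_mul,
        mul_inv_cancel_left₀ hα]
    · have hdeg : (C α⁻¹ * derivative Q).natDegree < n :=
        (natDegree_C_mul_le _ _).trans_lt (h ▸ natDegree_derivative_lt (by omega))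
      obtain ⟨R, hR⟩ := ih _ hdeg (C α⁻¹ * derivative Q) rfl
      refine ⟨C α⁻¹ * Q - R, ?_⟩
      have hαQ : C α * (C α⁻¹ * Q) = Q := by
        rw [← mul_assoc, ← map_mul, mul_inv_cancel₀ hα, map_one, one_mul]
      rw [derivative_sub, derivative_C_mul, mul_sub, hαQ]
      linear_combination -hR

theorem exists_derivative_add_C_mul_eq [CharZero K] (α : K) (Q : K[X]) :
    ∃ R : K[X], derivative R + C α * R = Q := by
  rcases eq_or_ne α 0 with rfl | hα
  · simpa using exists_derivative_eq Q
  · exact exists_derivative_add_C_mul_eq_of_ne_zero hα Q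

end Polynomial

theorem hasDerivAt_eval_mul_exp (α : ℂ) (Q : ℂ[X]) (t : ℂ) :
    HasDerivAt (fun s => Q.eval s * Complex.exp (α * s))
      ((derivative Q + C α * Q).eval t * Complex.exp (α * t)) t := by
  have hexp : HasDerivAt (fun s => Complex.exp (α * s)) (Complex.exp (α * t) * α) t := by
    simpa using ((hasDerivAt_id t).const_mul α).cexp
  refine ((Q.hasDerivAt t).mul hexp).congr_deriv ?_
  simp only [eval_add, eval_mul, eval_C]
  ring

theorem exists_iteratedDeriv_eval_mul_exp_eq (α : ℂ) (m : ℕ) (Q : ℂ[X]) :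
    ∃ R : ℂ[X], iteratedDeriv m (fun s => R.eval s * Complex.exp (α * s)) =
      fun s => Q.eval s * Complex.exp (α * s) := by
  induction m generalizing Q with
  | zero => exact ⟨Q, iteratedDeriv_zero⟩
  | succ m ih =>
    obtain ⟨S, hS⟩ := exists_derivative_add_C_mul_eq α Q
    obtain ⟨R, hR⟩ := ih S
    refine ⟨R, funext fun t => ?_⟩
    rw [iteratedDeriv_succ, hR, (hasDerivAt_eval_mul_exp α S t).deriv, hS]

theorem Polynomial.exists_norm_eval_le_mul_exp {𝕜 : Type*} [NormedField 𝕜] (Q : 𝕜[X]) :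
    ∃ M : ℝ, ∀ t : 𝕜, ‖Q.eval t‖ ≤ M * Real.exp ‖t‖ := by
  refine ⟨∑ i ∈ Finset.range (Q.natDegree + 1), ‖Q.coeff i‖ * i.factorial, fun t => ?_⟩
  have hpow (i : ℕ) : ‖t‖ ^ i ≤ i.factorial * Real.exp ‖t‖ := by
    have := Real.pow_div_factorial_le_exp _ (norm_nonneg t) i
    rwa [div_le_iff₀ (by positivity), mul_comm] at this
  rw [eval_eq_sum_range, Finset.sum_mul]
  refine (norm_sum_le _ _).trans (Finset.sum_le_sum fun i _ => ?_)
  rw [norm_mul, norm_pow, mul_assoc]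
  exact mul_le_mul_of_nonneg_left (hpow i) (norm_nonneg _)

theorem integrable_exp_neg_mul_norm_sq_complex {c : ℝ} (hc : 0 < c) :
    Integrable (fun t : ℂ => Real.exp (-c * ‖t‖ ^ 2)) := by
  have h := GaussianFourier.integrable_cexp_neg_mul_sq_norm_add (V := ℂ) (b := (c : ℂ))
    (by simpa using hc) 0 0
  refine h.norm.congr (ae_of_all _ fun t => ?_)
  simp only [zero_mul, add_zero, Complex.norm_exp]
  norm_cast

theorem memFock_of_norm_le_mul_exp {f : ℂ → ℂ} (hf : Differentiable ℂ f) {M N : ℝ}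
    (hbound : ∀ t, ‖f t‖ ≤ M * Real.exp (N * ‖t‖)) : MemFock f := by
  refine ⟨hf, (integrable_exp_neg_mul_norm_sq_complex (c := 1 / 2) (by norm_num)).const_mul
    (M ^ 2 * Real.exp (2 * N ^ 2)) |>.mono' (by unfold fockWeight; have := hf.continuous; fun_prop)
    (ae_of_all _ fun t => ?_)⟩
  have hsq : ‖f t‖ ^ 2 ≤ (M * Real.exp (N * ‖t‖)) ^ 2 :=
    pow_le_pow_left₀ (norm_nonneg _) (hbound t) 2
  -- `2 N s - s² ≤ 2 N² - s²/2` since the difference is `(2N - s)²/2`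
  have hexp : 2 * (N * ‖t‖) - ‖t‖ ^ 2 ≤ 2 * N ^ 2 + -(1 / 2) * ‖t‖ ^ 2 := by
    nlinarith [sq_nonneg (2 * N - ‖t‖)]
  rw [Real.norm_of_nonneg (by unfold fockWeight; positivity), fockWeight]
  calc ‖f t‖ ^ 2 * Real.exp (-‖t‖ ^ 2)
      ≤ (M * Real.exp (N * ‖t‖)) ^ 2 * Real.exp (-‖t‖ ^ 2) :=
        mul_le_mul_of_nonneg_right hsq (Real.exp_nonneg _)
    _ = M ^ 2 * Real.exp (2 * (N * ‖t‖) - ‖t‖ ^ 2) := by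
        rw [mul_pow, ← Real.exp_nat_mul, mul_assoc, ← Real.exp_add]
        push_cast
        ring_nf
    _ ≤ M ^ 2 * (Real.exp (2 * N ^ 2) * Real.exp (-(1 / 2) * ‖t‖ ^ 2)) := by
        rw [← Real.exp_add]
        gcongr
    _ = _ := by ring

theorem memFock_eval_mul_exp (α : ℂ) (Q : ℂ[X]) :
    MemFock fun t => Q.eval t * Complex.exp (α * t) := by
  obtain ⟨M, hM⟩ := Q.exists_norm_eval_le_mul_exp
  refine memFock_of_norm_le_mul_exp (by fun_prop) (M := M) (N := 1 + ‖α‖) fun t => ?_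
  have hexp : ‖Complex.exp (α * t)‖ ≤ Real.exp (‖α‖ * ‖t‖) :=
    (Complex.norm_exp_le_exp_norm _).trans_eq (by rw [norm_mul])
  calc ‖Q.eval t * Complex.exp (α * t)‖ ≤ M * Real.exp ‖t‖ * Real.exp (‖α‖ * ‖t‖) :=
        norm_mul_le_of_le (hM t) hexp
    _ = M * Real.exp ((1 + ‖α‖) * ‖t‖) := by rw [mul_assoc, ← Real.exp_add]; ring_nf

theorem eq_zero_of_pow_mul_eq_pow_mul {X 𝕜 : Type*} [TopologicalSpace X] [NormedField 𝕜]
    {w u G : X → 𝕜} (hw : Continuous w) (hu : Continuous u) (hG : Continuous G)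
    (hdense : Dense {x | w x ≠ 0}) {k m : ℕ} (hkm : k < m)
    (h : ∀ x, w x ^ k * u x = w x ^ m * G x) {x₀ : X} (hx₀ : w x₀ = 0) : u x₀ = 0 := by
  have hu_eq : u = fun x => w x ^ (m - k) * G x := by
    refine hu.ext_on hdense (by fun_prop) fun x hx => mul_left_cancel₀ (pow_ne_zero k hx) ?_
    rw [h, ← mul_assoc, ← pow_add, Nat.add_sub_cancel' hkm.le]
  simp [hu_eq, hx₀, Nat.sub_ne_zero_of_lt hkm]

theorem dense_setOf_mul_add_ne_zero {𝕜 : Type*} [NontriviallyNormedField 𝕜] {p : 𝕜}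
    (hp : p ≠ 0) (q : 𝕜) : Dense {t : 𝕜 | p * t + q ≠ 0} := by
  convert dense_compl_singleton (-q / p) using 1
  ext t
  simp [eq_div_iff hp, eq_neg_iff_add_eq_zero, mul_comm]

theorem memFock_Kker (a b z : ℂ) (k : ℕ) : MemFock (Kker a b z k) := by
  convert memFock_eval_mul_exp (star z) ((Polynomial.C a * X + Polynomial.C b) ^ k) using 2 with x
  simp [Kker, mul_comm x]

section Kker

variable {a b z A B C D : ℂ} {k m : ℕ}

theorem mul_exp_mul_Kker_affine (t : ℂ) :
    C * Complex.exp (D * t) * Kker a b z k (A * t + B) =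
      (a * A * t + (a * B + b)) ^ k *
        (C * Complex.exp (B * star z) * Complex.exp ((D + A * star z) * t)) := by
  have hexp : Complex.exp (D * t) * Complex.exp ((A * t + B) * star z) =
      Complex.exp (B * star z) * Complex.exp ((D + A * star z) * t) := by
    rw [← Complex.exp_add, ← Complex.exp_add]
    ring_nf
  simp only [Kker]
  linear_combination (C * (a * A * t + (a * B + b)) ^ k) * hexp

theorem not_domS_Kker_of_lt (hA : A ≠ 0) (hC : C ≠ 0) (ha : a ≠ 0) (hkm : k < m) :
    ¬ domS m a b A B C D (Kker a b z k) := by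
  rintro ⟨-, g, hg, hgeq⟩
  have hG : Continuous (iteratedDeriv m g) := hg.1.contDiff.continuous_iteratedDeriv m le_top
  have hvanish := eq_zero_of_pow_mul_eq_pow_mul (w := fun t => a * A * t + (a * B + b))
    (u := fun t => C * Complex.exp (B * star z) * Complex.exp ((D + A * star z) * t))
    (by fun_prop) (by fun_prop) hG
    (dense_setOf_mul_add_ne_zero (mul_ne_zero ha hA) (a * B + b)) hkm
    (fun t => by rw [← mul_exp_mul_Kker_affine, hgeq, add_assoc])
    (x₀ := -(a * B + b) / (a * A)) (by field_simp; ring)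
  simp [hC, Complex.exp_ne_zero] at hvanish

theorem domS_Kker_of_le (hkm : m ≤ k) : domS m a b A B C D (Kker a b z k) := by
  obtain ⟨j, rfl⟩ := Nat.exists_eq_add_of_le hkm
  obtain ⟨R, hR⟩ := exists_iteratedDeriv_eval_mul_exp_eq (D + A * star z) m
    (Polynomial.C (C * Complex.exp (B * star z)) *
      (Polynomial.C (a * A) * X + Polynomial.C (a * B + b)) ^ j)
  refine ⟨memFock_Kker a b z _, _, memFock_eval_mul_exp (D + A * star z) R, fun t => ?_⟩
  rw [hR, mul_exp_mul_Kker_affine, pow_add]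
  simp only [eval_mul, eval_C, eval_pow, eval_add, eval_X, add_assoc]
  ring

end Kker

theorem stmt11_general (m : ℕ) (a b A B C D : ℂ)
    (hA : A ≠ 0) (hC : C ≠ 0) (ha : a ≠ 0) (z : ℂ) :
    (∀ k : ℕ, k < m → ¬ domS m a b A B C D (Kker a b z k)) ∧
    (∀ k : ℕ, m ≤ k → domS m a b A B C D (Kker a b z k)) :=
  ⟨fun _ hkm => not_domS_Kker_of_lt hA hC ha hkm, fun _ hkm => domS_Kker_of_le hkm⟩

/-- `K_{z,a,b}^{[k]} ∉ dom(S_max)` for `k < m`, while `K_{z,a,b}^{[k]} ∈ dom(S_max)` for `k ≥ m`. -/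
theorem stmt11 (m : ℕ) (hm : 1 ≤ m) (a b A B C D : ℂ)
    (hA : A ≠ 0) (hC : C ≠ 0) (ha : a ≠ 0) (z : ℂ) :
    (∀ k : ℕ, k < m → ¬ domS m a b A B C D (Kker a b z k)) ∧
    (∀ k : ℕ, m ≤ k → domS m a b A B C D (Kker a b z k)) :=
  stmt11_general m a b A B C D hA hC ha z
end

section
/- Let φ be a nonconstant entire function, ψ entire with no zeros, Φ entire not identically zero, and m ≥ 0. Suppose ψ(u)φ(u)^m conj(Φ(z)) e^{φ(u)·conj(z)} = Φ(u) conj(ψ(z)φ(z)^m) e^{u·conj(φ(z))} for all u, z ∈ ℂ. Then φ(u) = Au + B with A real, and there is a nonzero real constant C such that C e^{u·conj(B)} Φ(u) = ψ(u)(Au+B)^m for all u. -/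
/-!
Write `P = ψ φ^m`. Multiplying the functional equation at `(u, w)` and `(z₀, z₀)` and comparing
with the product at `(u, z₀)` and `(z₀, w)`, the values of `P` and `Φ` cancel and leave
`exp ((φ u - φ z₀) conj (w - z₀) - (u - z₀) conj (φ w - φ z₀)) = 1` wherever `P u ≠ 0`.
The zeros of `P` are isolated and an entire function with constant exponential is constant, so
the exponent vanishes identically, which makes `φ` affine with real slope `A`. For
`φ u = A u + B` the factors `exp (A u conj z)` cancel and the equation says that
`Q u = P u exp (-u conj B)` satisfies `Q u conj (Φ z) = Φ u conj (Q z)`, which forces `Q = C Φ`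
with `C` real.
-/

open Complex ComplexConjugate

theorem Differentiable.dense_setOf_ne_zero {f : ℂ → ℂ} (hf : Differentiable ℂ f)
    (h : ∃ z, f z ≠ 0) : Dense {z | f z ≠ 0} := by
  intro x
  rcases (hf.analyticAt x).eventually_eq_zero_or_eventually_ne_zero with hzero | hne
  · obtain ⟨z, hz⟩ := h
    exact absurd (AnalyticOnNhd.eqOn_zero_of_preconnected_of_eventuallyEq_zero
      (fun w _ => hf.analyticAt w) isPreconnected_univ (Set.mem_univ x) hzero (Set.mem_univ z)) hz
  · exact mem_closure_iff_frequently.mpr (hne.frequently.filter_mono nhdsWithin_le_nhds)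

theorem Differentiable.eq_of_cexp_eq_const {f : ℂ → ℂ} (hf : Differentiable ℂ f) {c : ℂ}
    (h : ∀ x, cexp (f x) = c) (x y : ℂ) : f x = f y := by
  refine is_const_of_deriv_eq_zero hf (fun x => ?_) x y
  have hexp : HasDerivAt (fun x => cexp (f x)) 0 x := by
    simp only [h]
    exact hasDerivAt_const x c
  simpa [exp_ne_zero] using (hf x).hasDerivAt.cexp.unique hexp

theorem exists_real_mul_of_mul_star_symm {α : Type*} {Q Φ : α → ℂ}
    (h : ∀ u z, Q u * star (Φ z) = Φ u * star (Q z)) {z₀ : α} (hz₀ : Φ z₀ ≠ 0) :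
    ∃ C : ℝ, ∀ u, Q u = C * Φ u := by
  have hz₀' : star (Φ z₀) ≠ 0 := star_ne_zero.mpr hz₀
  obtain ⟨C, hC⟩ : ∃ C : ℝ, star (Q z₀) / star (Φ z₀) = C := by
    refine conj_eq_iff_real.mp ?_
    rw [map_div₀, ← star_def, star_star, star_star, div_eq_div_iff hz₀ hz₀', h z₀ z₀, mul_comm]
  refine ⟨C, fun u => ?_⟩
  rw [← hC, div_mul_eq_mul_div, eq_div_iff hz₀', h u z₀, mul_comm]

theorem cexp_cross_eq_of_kernel_symm {P Φ φ : ℂ → ℂ}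
    (h : ∀ u z, P u * star (Φ z) * cexp (φ u * star z) = Φ u * star (P z) * cexp (u * star (φ z)))
    {u w z₀ : ℂ} (hu : P u ≠ 0) (hPz₀ : P z₀ ≠ 0) (hw : Φ w ≠ 0) (hΦz₀ : Φ z₀ ≠ 0) :
    cexp ((φ u - φ z₀) * star (w - z₀)) = cexp ((u - z₀) * star (φ w - φ z₀)) := by
  set e : ℂ → ℂ → ℂ := fun u z => φ u * star z - u * star (φ z)
  have he : ∀ u z, P u * star (Φ z) * cexp (e u z) = Φ u * star (P z) := fun u z => by
    rw [exp_sub, mul_div_assoc', h u z, mul_div_assoc, div_self (exp_ne_zero _), mul_one]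
  have hM : P u * star (Φ w) * (P z₀ * star (Φ z₀)) ≠ 0 := by
    simp [hu, hPz₀, hw, hΦz₀]
  have hquad : cexp (e u w + e z₀ z₀) = cexp (e u z₀ + e z₀ w) := by
    refine mul_left_cancel₀ hM ?_
    rw [exp_add, exp_add]
    calc P u * star (Φ w) * (P z₀ * star (Φ z₀)) * (cexp (e u w) * cexp (e z₀ z₀))
        = P u * star (Φ w) * cexp (e u w) * (P z₀ * star (Φ z₀) * cexp (e z₀ z₀)) := by ring
      _ = P u * star (Φ z₀) * cexp (e u z₀) * (P z₀ * star (Φ w) * cexp (e z₀ w)) := by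
        rw [he, he, he, he]; ring
      _ = P u * star (Φ w) * (P z₀ * star (Φ z₀)) * (cexp (e u z₀) * cexp (e z₀ w)) := by ring
  calc cexp ((φ u - φ z₀) * star (w - z₀))
      = cexp (e u w + e z₀ z₀) / cexp (e u z₀ + e z₀ w) * cexp ((u - z₀) * star (φ w - φ z₀)) := by
        rw [← exp_sub, ← exp_add]
        simp only [e, star_sub]
        ring_nf
    _ = cexp ((u - z₀) * star (φ w - φ z₀)) := by
        rw [hquad, div_self (exp_ne_zero _), one_mul]

theorem cross_eq_of_cexp_cross_eq_on_dense {φ : ℂ → ℂ} (hφ : Differentiable ℂ φ) {S : Set ℂ}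
    (hS : Dense S) {w z₀ : ℂ}
    (h : ∀ u ∈ S, cexp ((φ u - φ z₀) * star (w - z₀)) = cexp ((u - z₀) * star (φ w - φ z₀)))
    (u : ℂ) : (φ u - φ z₀) * star (w - z₀) = (u - z₀) * star (φ w - φ z₀) := by
  set f : ℂ → ℂ := fun u => (φ u - φ z₀) * star (w - z₀) - (u - z₀) * star (φ w - φ z₀)
  have hf : Differentiable ℂ f := by fun_prop
  have hexp : (fun u => cexp (f u)) = fun _ => 1 :=
    Continuous.ext_on hS hf.continuous.cexp continuous_const fun u hu => by
      simp only [f, exp_sub, h u hu, div_self (exp_ne_zero _)]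
  simpa [f, sub_eq_zero] using hf.eq_of_cexp_eq_const (congrFun hexp) u z₀

theorem exists_real_slope_of_cross_eq {φ : ℂ → ℂ} {w z₀ : ℂ} (hw : w ≠ z₀)
    (h : ∀ u, (φ u - φ z₀) * star (w - z₀) = (u - z₀) * star (φ w - φ z₀)) :
    ∃ A : ℝ, ∀ u, φ u = A * u + φ 0 := by
  have hd : star (w - z₀) ≠ 0 := star_ne_zero.mpr (sub_ne_zero.mpr hw)
  set s := star (φ w - φ z₀) / star (w - z₀) with hs
  have hlin : ∀ u, φ u = s * (u - z₀) + φ z₀ := fun u => by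
    rw [hs, div_mul_eq_mul_div, mul_comm, ← (eq_div_iff hd).mpr (h u)]
    ring
  have hsw : φ w - φ z₀ = s * (w - z₀) := by rw [hlin w]; ring
  have hreal : conj s = s :=
    calc conj s = (φ w - φ z₀) / (w - z₀) := by rw [hs, map_div₀, ← star_def, star_star, star_star]
      _ = s := by rw [hsw, mul_div_assoc, div_self (sub_ne_zero.mpr hw), mul_one]
  obtain ⟨A, hA⟩ := conj_eq_iff_real.mp hreal
  exact ⟨A, fun u => by rw [hlin u, hlin 0, ← hA]; ring⟩

theorem mul_cexp_mul_star_symm {P Φ φ : ℂ → ℂ}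
    (h : ∀ u z, P u * star (Φ z) * cexp (φ u * star z) = Φ u * star (P z) * cexp (u * star (φ z)))
    {A : ℝ} {B : ℂ} (hφ : ∀ u, φ u = A * u + B) (u z : ℂ) :
    P u * cexp (-(u * star B)) * star (Φ z) = Φ u * star (P z * cexp (-(z * star B))) := by
  have hstar : ∀ x, star (cexp x) = cexp (star x) := fun x => (exp_conj x).symm
  calc P u * cexp (-(u * star B)) * star (Φ z)
      = P u * star (Φ z) * cexp (φ u * star z) * cexp (-(u * star B) - φ u * star z) := by
        rw [mul_assoc (P u * star (Φ z)), ← exp_add]; ring_nf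
    _ = Φ u * star (P z) * cexp (u * star (φ z)) * cexp (-(u * star B) - φ u * star z) := by
        rw [h u z]
    _ = Φ u * star (P z * cexp (-(z * star B))) := by
        rw [mul_assoc (Φ u * star (P z)), ← exp_add, star_mul, hstar, hφ u, hφ z]
        simp only [star_add, star_mul, star_neg, star_def, conj_ofReal, conj_conj]
        ring_nf

/-- If the symbols satisfy the hermitian functional equation, then `φ(u) = Au + B` with `A`
real and `C e^{u conj(B)} Φ(u) = ψ(u)(Au+B)^m` for a nonzero real constant `C`. -/
theorem stmt15 (m : ℕ) (ψ φ Φ : ℂ → ℂ)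
    (hψ : Differentiable ℂ ψ) (hφ : Differentiable ℂ φ) (hΦ : Differentiable ℂ Φ)
    (hψ0 : ∀ z, ψ z ≠ 0) (hΦ0 : ∃ z, Φ z ≠ 0) (hφc : ∃ z w, φ z ≠ φ w)
    (heq : ∀ u z : ℂ,
      ψ u * (φ u) ^ m * star (Φ z) * Complex.exp (φ u * star z) =
      Φ u * star (ψ z * (φ z) ^ m) * Complex.exp (u * star (φ z))) :
    ∃ (A : ℝ) (B : ℂ) (C : ℝ), C ≠ 0 ∧ (∀ u, φ u = (A : ℂ) * u + B) ∧
      ∀ u : ℂ, (C : ℂ) * Complex.exp (u * star B) * Φ u =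
        ψ u * ((A : ℂ) * u + B) ^ m := by
  set P : ℂ → ℂ := fun u => ψ u * φ u ^ m
  have hP0 : ∃ z, P z ≠ 0 := by
    obtain ⟨z, w, hzw⟩ := hφc
    by_cases hz : φ z = 0
    · exact ⟨w, mul_ne_zero (hψ0 w) (pow_ne_zero m fun hw => hzw (hz.trans hw.symm))⟩
    · exact ⟨z, mul_ne_zero (hψ0 z) (pow_ne_zero m hz)⟩
  have hP : Differentiable ℂ P := hψ.mul (hφ.pow m)
  have hPdense := hP.dense_setOf_ne_zero hP0
  have hΦdense := hΦ.dense_setOf_ne_zero hΦ0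
  obtain ⟨z₀, hPz₀ : P z₀ ≠ 0, hΦz₀ : Φ z₀ ≠ 0⟩ := (hPdense.inter_of_isOpen_left hΦdense
    (isOpen_ne_fun hP.continuous continuous_const)).nonempty
  obtain ⟨w, hw : w ≠ z₀, hΦw : Φ w ≠ 0⟩ :=
    hΦdense.inter_open_nonempty {z₀}ᶜ isOpen_compl_singleton ⟨z₀ + 1, by simp⟩
  obtain ⟨A, hA⟩ := exists_real_slope_of_cross_eq hw <|
    cross_eq_of_cexp_cross_eq_on_dense hφ hPdense fun u hu =>
      cexp_cross_eq_of_kernel_symm (P := P) heq hu hPz₀ hΦw hΦz₀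
  obtain ⟨C, hC⟩ := exists_real_mul_of_mul_star_symm (mul_cexp_mul_star_symm (P := P) heq hA) hΦz₀
  refine ⟨A, φ 0, C, ?_, hA, fun u => ?_⟩
  · rintro rfl
    exact hPz₀ (by simpa [exp_ne_zero] using hC z₀)
  · calc (C : ℂ) * cexp (u * star (φ 0)) * Φ u = C * Φ u * cexp (u * star (φ 0)) := by ring
      _ = P u := by rw [← hC u, mul_assoc, ← exp_add, neg_add_cancel, exp_zero, mul_one]
      _ = ψ u * (A * u + φ 0) ^ m := by rw [← hA u]
end
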